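/- arXiv:1608.05056 — 2 statements merged into one kernel-verified Lean document; each statement's English description precedes it below -/
import Mathlib

section
/- Let U, V, W be arbitrary quadratic binary forms and a_x a linear binary form over a field of characteristic zero. Then (U, (V,a_x)_1·(W,a_x)_1)_1 = (M, a_x²)_2 + (N, a_x²)_1, where M = (1/2)·(U,W)_1·V + (1/2)·(U,V)_1·W (a quartic) and N = −(1/2)·(U, V·W)_2 − (1/6)·U·(V,W)_2 (a quadratic). -/
open MvPolynomial

/-- The `r`-th transvectant of binary forms `G`, `H` of degrees `m`, `n`:
`(G,H)_r = ((m−r)!(n−r)!)/(m!·n!) · Σ_{i=0}^{r} (−1)^i·C(r,i)·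
  (∂^r G/∂x1^{r−i}∂x2^{i})·(∂^r H/∂x1^{i}∂x2^{r−i})`. -/
noncomputable def transvectant {k : Type*} [Field k] (m n r : ℕ)
    (G H : MvPolynomial (Fin 2) k) : MvPolynomial (Fin 2) k :=
  C ((((m - r).factorial * (n - r).factorial : ℕ) : k) /
      ((m.factorial * n.factorial : ℕ) : k)) *
    ∑ i ∈ Finset.range (r + 1),
      C ((-1 : k) ^ i * (r.choose i : k)) *
        ((fun p => pderiv (0 : Fin 2) p)^[r - i]
            ((fun p => pderiv (1 : Fin 2) p)^[i] G) *
          (fun p => pderiv (0 : Fin 2) p)^[i]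
            ((fun p => pderiv (1 : Fin 2) p)^[r - i] H))

/-- The linear binary form `u1·x1 + u2·x2`. -/
noncomputable def linForm {k : Type*} [Field k] (u1 u2 : k) : MvPolynomial (Fin 2) k :=
  C u1 * X 0 + C u2 * X 1

/-! Writing each quadratic form through its three coefficients turns both sides into explicit
polynomials in `x₁, x₂`, with coefficients polynomial in those of `U, V, W` and in `a1, a2`; the
identity is then checked pointwise, which suffices because `k` is infinite. -/

open Finsupp in
theorem Finsupp.fin_two_eq_of_degree_eq_two {d : Fin 2 →₀ ℕ} (hd : d.degree = 2) :
    d = single 0 2 ∨ d = single 0 1 + single 1 1 ∨ d = single 1 2 := by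
  rw [degree_eq_sum, Fin.sum_univ_two] at hd
  have hd0 : d 0 ≤ 2 := by omega
  simp only [Finsupp.ext_iff, Fin.forall_fin_two, coe_add, Pi.add_apply, single_apply]
  interval_cases d 0 <;> simp <;> omega

theorem MvPolynomial.IsHomogeneous.exists_eq_quadratic {R : Type*} [CommSemiring R]
    {P : MvPolynomial (Fin 2) R} (hP : P.IsHomogeneous 2) :
    ∃ a b c : R, P = C a * X 0 ^ 2 + C b * (X 0 * X 1) + C c * X 1 ^ 2 := by
  refine ⟨coeff (.single 0 2) P, coeff (.single 0 1 + .single 1 1) P, coeff (.single 1 2) P, ?_⟩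
  simp only [X_pow_eq_monomial]
  simp only [X, monomial_mul, C_mul_monomial, mul_one]
  ext d
  simp only [coeff_add, coeff_monomial]
  by_cases hd : d.degree = 2
  · rcases Finsupp.fin_two_eq_of_degree_eq_two hd with rfl | rfl | rfl <;>
      simp [Finsupp.ext_iff, Fin.forall_fin_two]
  · rw [hP.coeff_eq_zero hd]
    split_ifs <;> subst_vars <;> simp_all

section Transvectant

variable {k : Type*} [Field k]

theorem transvectant_one (m n : ℕ) (G H : MvPolynomial (Fin 2) k) :
    transvectant m n 1 G H =
      C ((((m - 1).factorial * (n - 1).factorial : ℕ) : k) / ((m.factorial * n.factorial : ℕ) : k)) *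
        (pderiv 0 G * pderiv 1 H - pderiv 1 G * pderiv 0 H) := by
  rw [transvectant]
  congr 1
  simp [Finset.sum_range_succ]
  ring

theorem transvectant_two (m n : ℕ) (G H : MvPolynomial (Fin 2) k) :
    transvectant m n 2 G H =
      C ((((m - 2).factorial * (n - 2).factorial : ℕ) : k) / ((m.factorial * n.factorial : ℕ) : k)) *
        (pderiv 0 (pderiv 0 G) * pderiv 1 (pderiv 1 H) -
          2 * pderiv 0 (pderiv 1 G) * pderiv 0 (pderiv 1 H) +
          pderiv 1 (pderiv 1 G) * pderiv 0 (pderiv 0 H)) := by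
  rw [transvectant]
  congr 1
  simp [Finset.sum_range_succ]
  ring

end Transvectant

/-- For arbitrary quadratic binary forms `U, V, W` and a linear binary form `a_x` over a
field of characteristic zero, `(U, (V,a_x)_1·(W,a_x)_1)_1 = (M, a_x²)_2 + (N, a_x²)_1`,
where `M = (1/2)·(U,W)_1·V + (1/2)·(U,V)_1·W` and
`N = −(1/2)·(U,V·W)_2 − (1/6)·U·(V,W)_2`. -/
theorem pascal_stmt_11 {k : Type*} [Field k] [CharZero k]
    (U V W : MvPolynomial (Fin 2) k)
    (hU : U.IsHomogeneous 2) (hV : V.IsHomogeneous 2) (hW : W.IsHomogeneous 2)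
    (a1 a2 : k) :
    let ax := linForm a1 a2
    let M := C (1 / 2 : k) * transvectant 2 2 1 U W * V +
      C (1 / 2 : k) * transvectant 2 2 1 U V * W
    let N := -(C (1 / 2 : k) * transvectant 2 4 2 U (V * W)) -
      C (1 / 6 : k) * U * transvectant 2 2 2 V W
    transvectant 2 2 1 U (transvectant 2 1 1 V ax * transvectant 2 1 1 W ax) =
      transvectant 4 2 2 M (ax ^ 2) + transvectant 2 2 1 N (ax ^ 2) := by
  intro ax M N
  obtain ⟨u₀, u₁, u₂, rfl⟩ := hU.exists_eq_quadratic
  obtain ⟨v₀, v₁, v₂, rfl⟩ := hV.exists_eq_quadratic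
  obtain ⟨w₀, w₁, w₂, rfl⟩ := hW.exists_eq_quadratic
  simp only [ax, M, N, linForm, transvectant_one, transvectant_two]
  simp only [sq, two_mul, map_add, map_sub, map_neg, pderiv_mul, pderiv_C, pderiv_X_self,
    pderiv_X_of_ne (by decide : (1 : Fin 2) ≠ 0), pderiv_X_of_ne (by decide : (0 : Fin 2) ≠ 1),
    mul_zero, zero_mul, add_zero, zero_add, mul_one, one_mul, sub_zero]
  apply MvPolynomial.funext
  intro x
  simp only [map_add, map_sub, map_neg, map_mul, eval_C, eval_X, map_one]
  norm_num [Nat.factorial]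
  ring
end

section
/- Let a_x, b_x, c_x, d_x, e_x, f_x be six linear binary forms over a field of characteristic zero and set U = (b_x·c_x, d_x·f_x)_1 and V = (a_x·c_x, d_x·e_x)_1. Then (U,V)_2 = (1/4)·(cd)·S, where S = (da)(fc)(eb) − (ce)(bd)(af). -/
open MvPolynomial

/-!
For quadratics, `(G,H)_1` and `(G,H)_2` are explicit bilinear expressions in the first and second
partial derivatives. Products of linear forms are quadratics, so `U`, `V` and then `(U,V)_2` are
computed coefficientwise, and the theorem becomes a polynomial identity in the twelve coefficients.
The factor `1/4` of the transvectants is never cancelled, so the lemmas hold over any field;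
only the final identity uses `(4 : k) ≠ 0`.
-/

section BinaryQuadratic

variable {k : Type*} [Field k]

noncomputable def quadForm (p q r : k) : MvPolynomial (Fin 2) k :=
  C p * X 0 ^ 2 + C q * (X 0 * X 1) + C r * X 1 ^ 2

theorem linForm_mul_linForm (u1 u2 v1 v2 : k) :
    linForm u1 u2 * linForm v1 v2 = quadForm (u1 * v1) (u1 * v2 + u2 * v1) (u2 * v2) := by
  simp only [linForm, quadForm, C_mul, C_add]
  ring

theorem C_mul_quadForm (s p q r : k) :
    C s * quadForm p q r = quadForm (s * p) (s * q) (s * r) := by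
  simp only [quadForm, C_mul]
  ring

theorem pderiv_zero_linForm (u1 u2 : k) : pderiv 0 (linForm u1 u2) = C u1 := by
  simp [linForm, pderiv_X]

theorem pderiv_one_linForm (u1 u2 : k) : pderiv 1 (linForm u1 u2) = C u2 := by
  simp [linForm, pderiv_X]

theorem pderiv_zero_quadForm (p q r : k) :
    pderiv 0 (quadForm p q r) = linForm (2 * p) q := by
  simp only [quadForm, linForm, map_add, Derivation.leibniz, Derivation.leibniz_pow, pderiv_X,
    derivation_C, Pi.single_eq_same, Pi.single_eq_of_ne, one_ne_zero, ne_eq, not_false_eq_true,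
    smul_eq_mul, nsmul_eq_mul, C_mul, map_ofNat]
  ring

theorem pderiv_one_quadForm (p q r : k) :
    pderiv 1 (quadForm p q r) = linForm q (2 * r) := by
  simp only [quadForm, linForm, map_add, Derivation.leibniz, Derivation.leibniz_pow, pderiv_X,
    derivation_C, Pi.single_eq_same, Pi.single_eq_of_ne, zero_ne_one, ne_eq, not_false_eq_true,
    smul_eq_mul, nsmul_eq_mul, C_mul, map_ofNat]
  ring

theorem transvectant_two_two_one (G H : MvPolynomial (Fin 2) k) :
    transvectant 2 2 1 G H = C (1 / 4) * (pderiv 0 G * pderiv 1 H - pderiv 1 G * pderiv 0 H) := by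
  norm_num [transvectant, Finset.sum_range_succ, sub_eq_add_neg]

theorem transvectant_two_two_two (G H : MvPolynomial (Fin 2) k) :
    transvectant 2 2 2 G H = C (1 / 4) *
      (pderiv 0 (pderiv 0 G) * pderiv 1 (pderiv 1 H) -
        2 * (pderiv 0 (pderiv 1 G) * pderiv 0 (pderiv 1 H)) +
        pderiv 1 (pderiv 1 G) * pderiv 0 (pderiv 0 H)) := by
  norm_num [transvectant, Finset.sum_range_succ, sub_eq_add_neg]

theorem transvectant_two_two_one_quadForm (p q r p' q' r' : k) :
    transvectant 2 2 1 (quadForm p q r) (quadForm p' q' r') =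
      C (1 / 4) * quadForm (2 * (p * q' - q * p')) (4 * (p * r' - r * p'))
        (2 * (q * r' - r * q')) := by
  rw [transvectant_two_two_one, pderiv_zero_quadForm, pderiv_one_quadForm, pderiv_zero_quadForm,
    pderiv_one_quadForm, linForm_mul_linForm, linForm_mul_linForm]
  simp only [quadForm, map_mul, map_sub, map_add, map_ofNat]
  ring

theorem transvectant_two_two_two_quadForm (p q r p' q' r' : k) :
    transvectant 2 2 2 (quadForm p q r) (quadForm p' q' r') =
      C (1 / 4 * (4 * p * r' - 2 * q * q' + 4 * r * p')) := by
  simp only [transvectant_two_two_two, pderiv_zero_quadForm, pderiv_one_quadForm,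
    pderiv_zero_linForm, pderiv_one_linForm, map_mul, map_sub, map_add, map_ofNat]
  ring

end BinaryQuadratic

/-- For six linear binary forms over a field of characteristic zero, with
`U = (b_x·c_x, d_x·f_x)_1` and `V = (a_x·c_x, d_x·e_x)_1`, one has
`(U,V)_2 = (1/4)·(cd)·S` where `S = (da)(fc)(eb) − (ce)(bd)(af)`. -/
theorem pascal_stmt_13 {k : Type*} [Field k] [CharZero k]
    (a1 a2 b1 b2 c1 c2 d1 d2 e1 e2 f1 f2 : k) :
    let ax := linForm a1 a2
    let bx := linForm b1 b2
    let cx := linForm c1 c2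
    let dx := linForm d1 d2
    let ex := linForm e1 e2
    let fx := linForm f1 f2
    let U := transvectant 2 2 1 (bx * cx) (dx * fx)
    let V := transvectant 2 2 1 (ax * cx) (dx * ex)
    let S := (d1 * a2 - d2 * a1) * (f1 * c2 - f2 * c1) * (e1 * b2 - e2 * b1) -
      (c1 * e2 - c2 * e1) * (b1 * d2 - b2 * d1) * (a1 * f2 - a2 * f1)
    transvectant 2 2 2 U V = C ((1 / 4) * (c1 * d2 - c2 * d1) * S) := by
  intro ax bx cx dx ex fx U V S
  simp only [U, V, ax, bx, cx, dx, ex, fx, linForm_mul_linForm, transvectant_two_two_one_quadForm,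
    C_mul_quadForm, transvectant_two_two_two_quadForm]
  congr 1
  field_simp
  ring
end
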